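/- Let A ∈ ℝ^{m×n} have rank r and M̃ = [A, A+E₂, …, A+E_k]. Then for indices i = r+1,…,min(m,kn), σ_i(M̃) ≤ √(Σ_{j=2}^k (2‖A‖₂‖E_j‖₂ + ‖E_j‖₂²)). -/

import Mathlib

/-!
On the kernel `W` of `[A, A, …, A]`, which has dimension at least `kn - rank A ≥ kn - i`, the
matrix `M̃` acts as `[0, E₂, …, E_k]`, so the triangle and Cauchy–Schwarz inequalities give
`‖M̃ x‖² ≤ (∑ⱼ ‖Eⱼ‖²) ‖x‖²` for `x ∈ W`. By the min-max principle, a quadratic form bound on a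
subspace of codimension at most `i` bounds the `(i+1)`-st largest eigenvalue of `M̃ᵀ M̃`, i.e.
`σ_{i+1}(M̃)²`, by `∑ⱼ ‖Eⱼ‖² ≤ ∑ⱼ (2 ‖A‖ ‖Eⱼ‖ + ‖Eⱼ‖²)`.
-/

open Matrix Finset

/-- Spectral (ℓ²-operator) norm of a matrix. -/
noncomputable def specNorm {m n : Type*} [Fintype m] [Fintype n] [DecidableEq n]
    (A : Matrix m n ℝ) : ℝ :=
  ‖LinearMap.toContinuousLinearMap (Matrix.toEuclideanLin A)‖

/-- Eigenvalues of a real symmetric matrix, in nonincreasing order (0-based);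
returns 0 if the matrix is not Hermitian. -/
noncomputable def eigDesc {n : ℕ} (A : Matrix (Fin n) (Fin n) ℝ) : Fin n → ℝ :=
  if hA : A.IsHermitian then
    fun i => hA.eigenvalues (Tuple.sort hA.eigenvalues i.rev)
  else fun _ => 0

/-- The `i`-th largest singular value (0-based), defined as the square root of the
`i`-th largest eigenvalue of `Aᵀ * A`; zero for out-of-range indices. -/
noncomputable def sval {m n : ℕ} (A : Matrix (Fin m) (Fin n) ℝ) (i : ℕ) : ℝ :=
  if h : i < n then Real.sqrt (eigDesc (Aᵀ * A) ⟨i, h⟩) else 0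

/-- Horizontal concatenation of `k` matrices of size `m × n`. -/
noncomputable def hconcat {m n k : ℕ} (A : Fin k → Matrix (Fin m) (Fin n) ℝ) :
    Matrix (Fin m) (Fin (k * n)) ℝ :=
  Matrix.of fun i j => A (finProdFinEquiv.symm j).1 i (finProdFinEquiv.symm j).2

open scoped RealInnerProductSpace
open Module (finrank)

theorem Submodule.exists_mem_inf_ne_zero_of_finrank_lt {K V : Type*} [DivisionRing K]
    [AddCommGroup V] [Module K V] [FiniteDimensional K V] {U W : Submodule K V}
    (h : finrank K V < finrank K U + finrank K W) : ∃ x ∈ U ⊓ W, x ≠ 0 := by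
  refine exists_mem_ne_zero_of_ne_bot fun hbot => ?_
  have hsum := finrank_sup_add_finrank_inf_eq U W
  rw [hbot, finrank_bot] at hsum
  have := (U ⊔ W).finrank_le
  omega

namespace OrthonormalBasis

variable {ι E : Type*} [Fintype ι] [NormedAddCommGroup E] [InnerProductSpace ℝ E]
  (b : OrthonormalBasis ι ℝ E) {T : E →ₗ[ℝ] E} {μ : ι → ℝ}

theorem repr_apply_of_apply_eq_smul (hT : ∀ l, T (b l) = μ l • b l) (x : E) (l : ι) :
    b.repr (T x) l = μ l * b.repr x l := by
  classical
  conv_lhs => rw [← b.sum_repr x]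
  simp [hT, OrthonormalBasis.repr_self, Pi.single_apply, smul_smul, mul_comm]

theorem inner_apply_self_eq_sum_of_apply_eq_smul (hT : ∀ l, T (b l) = μ l • b l) (x : E) :
    ⟪x, T x⟫ = ∑ l, μ l * b.repr x l ^ 2 := by
  rw [← b.repr.inner_map_map, EuclideanSpace.inner_eq_star_dotProduct]
  simp [dotProduct, b.repr_apply_of_apply_eq_smul hT, sq, mul_assoc]

theorem repr_eq_zero_of_mem_span_image {s : Set ι} {x : E}
    (hx : x ∈ Submodule.span ℝ (b '' s)) {l : ι} (hl : l ∉ s) : b.repr x l = 0 := by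
  rw [← b.coe_toBasis, b.toBasis.mem_span_image] at hx
  simpa using Finsupp.notMem_support_iff.mp fun h => hl (hx h)

theorem mul_norm_sq_le_inner_apply_self_of_mem_span (hT : ∀ l, T (b l) = μ l • b l)
    {s : Set ι} {a : ℝ} (ha : ∀ l ∈ s, a ≤ μ l) {x : E}
    (hx : x ∈ Submodule.span ℝ (b '' s)) : a * ‖x‖ ^ 2 ≤ ⟪x, T x⟫ := by
  rw [b.inner_apply_self_eq_sum_of_apply_eq_smul hT, ← b.sum_sq_inner_right, Finset.mul_sum]
  refine Finset.sum_le_sum fun l _ => ?_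
  rw [← b.repr_apply_apply]
  by_cases hl : l ∈ s
  · exact mul_le_mul_of_nonneg_right (ha l hl) (sq_nonneg _)
  · simp [b.repr_eq_zero_of_mem_span_image hx hl]

theorem finrank_span_image (s : Finset ι) :
    finrank ℝ (Submodule.span ℝ (b '' s)) = s.card := by
  classical
  have hb := b.orthonormal.linearIndependent
  rw [← Finset.coe_image, finrank_span_finset_eq_card,
    Finset.card_image_of_injective _ hb.injective]
  simpa using (hb.linearIndepOn (s := (s : Set ι))).id_image

/-- The min-max principle: `W` meets the span of the eigenvectors indexed by `s` nontrivially. -/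
theorem le_of_forall_inner_apply_self_le [FiniteDimensional ℝ E]
    (hT : ∀ l, T (b l) = μ l • b l) {s : Finset ι} {a c : ℝ} (ha : ∀ l ∈ s, a ≤ μ l)
    {W : Submodule ℝ E} (hW : finrank ℝ E < s.card + finrank ℝ W)
    (hc : ∀ x ∈ W, ⟪x, T x⟫ ≤ c * ‖x‖ ^ 2) : a ≤ c := by
  obtain ⟨x, ⟨hxs, hxW⟩, hx0⟩ := Submodule.exists_mem_inf_ne_zero_of_finrank_lt
    (U := Submodule.span ℝ (b '' s)) (W := W) (by rwa [b.finrank_span_image])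
  have hpos : 0 < ‖x‖ ^ 2 := by positivity
  exact le_of_mul_le_mul_right
    ((b.mul_norm_sq_le_inner_apply_self_of_mem_span hT ha hxs).trans (hc x hxW)) hpos

end OrthonormalBasis

theorem Matrix.IsHermitian.toEuclideanLin_eigenvectorBasis {n : Type*} [Fintype n]
    [DecidableEq n] {S : Matrix n n ℝ} (hS : S.IsHermitian) (l : n) :
    toEuclideanLin S (hS.eigenvectorBasis l) = hS.eigenvalues l • hS.eigenvectorBasis l := by
  ext a
  exact congrFun (hS.mulVec_eigenvectorBasis l) a

theorem eigDesc_le_of_forall_inner_le {N : ℕ} {S : Matrix (Fin N) (Fin N) ℝ}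
    (hS : S.IsHermitian) (i : Fin N) {W : Submodule ℝ (EuclideanSpace ℝ (Fin N))}
    (hW : N ≤ i + finrank ℝ W) {c : ℝ}
    (hc : ∀ x ∈ W, ⟪x, toEuclideanLin S x⟫ ≤ c * ‖x‖ ^ 2) : eigDesc S i ≤ c := by
  rw [eigDesc, dif_pos hS]
  set σ := Tuple.sort hS.eigenvalues
  refine hS.eigenvectorBasis.le_of_forall_inner_apply_self_le
    hS.toEuclideanLin_eigenvectorBasis (s := (Finset.Ici i.rev).image σ) ?_ ?_ hc
  · simp only [Finset.mem_image, Finset.mem_Ici]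
    rintro _ ⟨j, hj, rfl⟩
    exact Tuple.monotone_sort hS.eigenvalues hj
  · rw [Finset.card_image_of_injective _ σ.injective, Fin.card_Ici, Fin.val_rev,
      finrank_euclideanSpace_fin]
    omega

theorem Matrix.inner_toEuclideanLin_transpose_mul_self {m n : Type*} [Fintype m] [Fintype n]
    [DecidableEq m] [DecidableEq n] (M : Matrix m n ℝ) (x : EuclideanSpace ℝ n) :
    ⟪x, toEuclideanLin (Mᵀ * M) x⟫ = ‖toEuclideanLin M x‖ ^ 2 := by
  rw [toLpLin_mul_same, ← conjTranspose_eq_transpose_of_trivial,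
    toEuclideanLin_conjTranspose_eq_adjoint, LinearMap.comp_apply,
    LinearMap.adjoint_inner_right, real_inner_self_eq_norm_sq]

theorem sval_le_sqrt_of_forall_norm_sq_le {m n : ℕ} (M : Matrix (Fin m) (Fin n) ℝ) {i : ℕ}
    (hi : i < n) {W : Submodule ℝ (EuclideanSpace ℝ (Fin n))} (hW : n ≤ i + finrank ℝ W)
    {c : ℝ} (hc : ∀ x ∈ W, ‖toEuclideanLin M x‖ ^ 2 ≤ c * ‖x‖ ^ 2) : sval M i ≤ √c := by
  rw [sval, dif_pos hi]
  refine Real.sqrt_le_sqrt (eigDesc_le_of_forall_inner_le ?_ ⟨i, hi⟩ hW fun x hx => ?_)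
  · simpa using isHermitian_conjTranspose_mul_self M
  · rw [M.inner_toEuclideanLin_transpose_mul_self]
    exact hc x hx

theorem Matrix.rank_add_finrank_ker_toEuclideanLin {𝕜 m n : Type*} [RCLike 𝕜] [Fintype m]
    [Fintype n] [DecidableEq n] (M : Matrix m n 𝕜) :
    M.rank + finrank 𝕜 (LinearMap.ker (toEuclideanLin M)) = Fintype.card n := by
  rw [M.rank_eq_finrank_range_toLin (PiLp.basisFun 2 𝕜 m) (PiLp.basisFun 2 𝕜 n),
    ← toLpLin_eq_toLin, LinearMap.finrank_range_add_finrank_ker, finrank_euclideanSpace]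

section SpecNorm

variable {m n : Type*} [Fintype m] [Fintype n] [DecidableEq n]

theorem specNorm_nonneg (A : Matrix m n ℝ) : 0 ≤ specNorm A := norm_nonneg _

@[simp]
theorem specNorm_zero : specNorm (0 : Matrix m n ℝ) = 0 := by simp [specNorm]

theorem norm_toEuclideanLin_apply_le (A : Matrix m n ℝ) (x : EuclideanSpace ℝ n) :
    ‖toEuclideanLin A x‖ ≤ specNorm A * ‖x‖ :=
  (LinearMap.toContinuousLinearMap (toEuclideanLin A)).le_opNorm x

end SpecNorm

section Hconcat

variable {m n k : ℕ}

theorem hconcat_add (A B : Fin k → Matrix (Fin m) (Fin n) ℝ) :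
    hconcat (A + B) = hconcat A + hconcat B := rfl

theorem rank_hconcat_const_le (A : Matrix (Fin m) (Fin n) ℝ) :
    (hconcat fun _ : Fin k => A).rank ≤ A.rank := by
  have hfactor : hconcat (fun _ : Fin k => A) = A * of fun (a : Fin n) (j : Fin (k * n)) =>
      if (finProdFinEquiv.symm j).2 = a then (1 : ℝ) else 0 := by
    ext r j
    simp [mul_apply, hconcat]
  rw [hfactor]
  exact rank_mul_le_left _ _

def blockVec (x : EuclideanSpace ℝ (Fin (k * n))) (j : Fin k) : EuclideanSpace ℝ (Fin n) :=
  WithLp.toLp 2 fun a => x (finProdFinEquiv (j, a))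

theorem sum_norm_blockVec_sq (x : EuclideanSpace ℝ (Fin (k * n))) :
    ∑ j, ‖blockVec x j‖ ^ 2 = ‖x‖ ^ 2 := by
  simp_rw [EuclideanSpace.norm_sq_eq, blockVec]
  rw [← finProdFinEquiv.sum_comp, Fintype.sum_prod_type]

theorem toEuclideanLin_hconcat_apply (B : Fin k → Matrix (Fin m) (Fin n) ℝ)
    (x : EuclideanSpace ℝ (Fin (k * n))) :
    toEuclideanLin (hconcat B) x = ∑ j, toEuclideanLin (B j) (blockVec x j) := by
  ext r
  simp [toLpLin_apply, mulVec, dotProduct, hconcat, blockVec, ← finProdFinEquiv.sum_comp,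
    Fintype.sum_prod_type, -finProdFinEquiv_symm_apply]

theorem norm_toEuclideanLin_hconcat_apply_sq_le (B : Fin k → Matrix (Fin m) (Fin n) ℝ)
    (x : EuclideanSpace ℝ (Fin (k * n))) :
    ‖toEuclideanLin (hconcat B) x‖ ^ 2 ≤ (∑ j, specNorm (B j) ^ 2) * ‖x‖ ^ 2 :=
  calc ‖toEuclideanLin (hconcat B) x‖ ^ 2
      ≤ (∑ j, specNorm (B j) * ‖blockVec x j‖) ^ 2 := by
        rw [toEuclideanLin_hconcat_apply]
        gcongr
        exact (norm_sum_le _ _).trans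
          (Finset.sum_le_sum fun j _ => norm_toEuclideanLin_apply_le _ _)
    _ ≤ (∑ j, specNorm (B j) ^ 2) * ∑ j, ‖blockVec x j‖ ^ 2 := sum_mul_sq_le_sq_mul_sq _ _ _
    _ = (∑ j, specNorm (B j) ^ 2) * ‖x‖ ^ 2 := by rw [sum_norm_blockVec_sq]

end Hconcat

theorem stmt11 {m n k : ℕ} (hk : 2 ≤ k) (A : Matrix (Fin m) (Fin n) ℝ)
    (E : Fin k → Matrix (Fin m) (Fin n) ℝ) (hE0 : E ⟨0, by omega⟩ = 0)
    (i : ℕ) (hi : A.rank ≤ i) (hi2 : i < min m (k * n)) :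
    sval (hconcat fun j => A + E j) i
      ≤ Real.sqrt (∑ j ∈ Finset.univ.erase (⟨0, by omega⟩ : Fin k),
          (2 * specNorm A * specNorm (E j) + specNorm (E j) ^ 2)) := by
  set A' := hconcat fun _ : Fin k => A
  have hker := A'.rank_add_finrank_ker_toEuclideanLin
  rw [Fintype.card_fin] at hker
  have hrank : A'.rank ≤ A.rank := rank_hconcat_const_le A
  refine sval_le_sqrt_of_forall_norm_sq_le _ (hi2.trans_le (min_le_right _ _))
    (W := LinearMap.ker (toEuclideanLin A')) (by omega) fun x hx => ?_
  rw [show (fun j => A + E j) = (fun _ => A) + E from rfl, hconcat_add, map_add,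
    LinearMap.add_apply, LinearMap.mem_ker.mp hx, zero_add]
  calc ‖toEuclideanLin (hconcat E) x‖ ^ 2 ≤ (∑ j, specNorm (E j) ^ 2) * ‖x‖ ^ 2 :=
        norm_toEuclideanLin_hconcat_apply_sq_le E x
    _ = (∑ j ∈ univ.erase ⟨0, by omega⟩, specNorm (E j) ^ 2) * ‖x‖ ^ 2 := by
        rw [← Finset.add_sum_erase _ _ (mem_univ _), hE0, specNorm_zero]
        ring
    _ ≤ _ := by
        gcongr with j
        have := mul_nonneg (specNorm_nonneg A) (specNorm_nonneg (E j))
        linarith
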